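/- Let σ₁, σ₂ > 0, q > 0, t > 0. The expectation ∫_ℝ e^x u(x,t) dx of e^X under the two-phase density u equals Λ(t) = e^{σ₁²t/2}·(2σ₁/(σ₁+σ₂))·e^{(1−σ₁/σ₂)q}·Φ((−q+σ₁σ₂t)/(σ₂√t)) + e^{σ₂²t/2}·[Φ((q−σ₂²t)/(σ₂√t)) + ((σ₂−σ₁)/(σ₁+σ₂))·e^{2q}·Φ((−q−σ₂²t)/(σ₂√t))], where Φ is the standard normal cdf. -/
import Mathlib

open Real MeasureTheory Set

noncomputable def Phi (z : ℝ) : ℝ :=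
  ∫ s in Set.Iic z, (1 / Real.sqrt (2 * π)) * Real.exp (-s ^ 2 / 2)

lemma setIntegral_affine (f : ℝ → ℝ) (c m : ℝ) (hc : c ≠ 0) (S : Set ℝ) :
    ∫ x in S, f x = |c| * ∫ y in (fun y => c * y + m) ⁻¹' S, f (c * y + m) := by
  have A : MeasurableEmbedding (fun y : ℝ => c * y + m) :=
    ((Homeomorph.mulLeft₀ c hc).trans
      (Homeomorph.addRight m)).isClosedEmbedding.measurableEmbedding
  have h1 : Measure.map (fun y : ℝ => c * y + m) volume
      = ENNReal.ofReal |c⁻¹| • volume := by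
    rw [show (fun y : ℝ => c * y + m) = (fun x : ℝ => x + m) ∘ (fun y : ℝ => c * y) from rfl,
      ← Measure.map_map (measurable_add_const m) (measurable_const_mul c)]
    rw [show (fun y : ℝ => c * y) = (c * ·) from rfl, Real.map_volume_mul_left hc,
      Measure.map_smul, map_add_right_eq_self]
  rw [← A.setIntegral_map f S, h1]
  simp only [Measure.restrict_smul, integral_smul_measure,
    ENNReal.toReal_ofReal (abs_nonneg _)]
  rw [smul_eq_mul, ← mul_assoc, abs_inv, mul_inv_cancel₀ (by positivity : |c| ≠ 0), one_mul]

lemma gauss_Iic (s m b : ℝ) (hs : 0 < s) :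
    ∫ x in Set.Iic b, (1 / (Real.sqrt (2 * π) * s)) * Real.exp (-(x - m) ^ 2 / (2 * s ^ 2))
      = Phi ((b - m) / s) := by
  rw [setIntegral_affine (fun x => (1 / (Real.sqrt (2 * π) * s)) * Real.exp (-(x - m) ^ 2 / (2 * s ^ 2))) s m hs.ne' (Set.Iic b)]
  have hpre : (fun y : ℝ => s * y + m) ⁻¹' Set.Iic b = Set.Iic ((b - m) / s) := by
    ext y
    simp only [Set.mem_preimage, Set.mem_Iic]
    rw [le_div_iff₀ hs]
    constructor <;> intro h <;> nlinarith
  rw [hpre, Phi, ← integral_const_mul]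
  refine setIntegral_congr_fun measurableSet_Iic fun y _ => ?_
  have h2 : (s * y + m - m) ^ 2 / (2 * s ^ 2) = y ^ 2 / 2 := by
    field_simp; ring
  rw [show s * y + m - m = s * y by ring]
  rw [show -(s * y) ^ 2 / (2 * s ^ 2) = -(y ^ 2) / 2 by field_simp]
  rw [abs_of_pos hs]
  field_simp

lemma gauss_Ioi (s m b : ℝ) (hs : 0 < s) :
    ∫ x in Set.Ioi b, (1 / (Real.sqrt (2 * π) * s)) * Real.exp (-(x - m) ^ 2 / (2 * s ^ 2))
      = Phi ((m - b) / s) := by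
  rw [setIntegral_affine (fun x => (1 / (Real.sqrt (2 * π) * s)) * Real.exp (-(x - m) ^ 2 / (2 * s ^ 2))) (-s) m (by simpa using hs.ne' : (-s : ℝ) ≠ 0) (Set.Ioi b)]
  have hpre : (fun y : ℝ => -s * y + m) ⁻¹' Set.Ioi b = Set.Iio ((m - b) / s) := by
    ext y
    simp only [Set.mem_preimage, Set.mem_Ioi, Set.mem_Iio]
    rw [lt_div_iff₀ hs]
    constructor <;> intro h <;> nlinarith
  rw [hpre, setIntegral_congr_set Iio_ae_eq_Iic, Phi, ← integral_const_mul]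
  refine setIntegral_congr_fun measurableSet_Iic fun y _ => ?_
  rw [show -s * y + m - m = -(s * y) by ring]
  rw [show -(-(s * y)) ^ 2 / (2 * s ^ 2) = -(y ^ 2) / 2 by field_simp]
  rw [abs_neg, abs_of_pos hs]
  field_simp

lemma complete_sq (s m : ℝ) (hs : 0 < s) (x : ℝ) :
    Real.exp x * ((1 / (Real.sqrt (2 * π) * s)) * Real.exp (-(x - m) ^ 2 / (2 * s ^ 2)))
      = Real.exp (m + s ^ 2 / 2) *
        ((1 / (Real.sqrt (2 * π) * s)) * Real.exp (-(x - (m + s ^ 2)) ^ 2 / (2 * s ^ 2))) := by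
  rw [mul_left_comm, mul_left_comm (Real.exp (m + s ^ 2 / 2)), ← Real.exp_add, ← Real.exp_add]
  congr 2
  field_simp
  ring

lemma expgauss_Iic (s m b : ℝ) (hs : 0 < s) :
    ∫ x in Set.Iic b,
        Real.exp x * ((1 / (Real.sqrt (2 * π) * s)) * Real.exp (-(x - m) ^ 2 / (2 * s ^ 2)))
      = Real.exp (m + s ^ 2 / 2) * Phi ((b - (m + s ^ 2)) / s) := by
  rw [setIntegral_congr_fun measurableSet_Iic fun x _ => complete_sq s m hs x,
    integral_const_mul, gauss_Iic s (m + s ^ 2) b hs]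

lemma expgauss_Ioi (s m b : ℝ) (hs : 0 < s) :
    ∫ x in Set.Ioi b,
        Real.exp x * ((1 / (Real.sqrt (2 * π) * s)) * Real.exp (-(x - m) ^ 2 / (2 * s ^ 2)))
      = Real.exp (m + s ^ 2 / 2) * Phi (((m + s ^ 2) - b) / s) := by
  rw [setIntegral_congr_fun measurableSet_Ioi fun x _ => complete_sq s m hs x,
    integral_const_mul, gauss_Ioi s (m + s ^ 2) b hs]

lemma expgauss_integrable (s m : ℝ) (hs : 0 < s) :
    Integrable (fun x =>
      Real.exp x * ((1 / (Real.sqrt (2 * π) * s)) * Real.exp (-(x - m) ^ 2 / (2 * s ^ 2)))) := by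
  have h : ∀ x : ℝ, Real.exp x * ((1 / (Real.sqrt (2 * π) * s)) * Real.exp (-(x - m) ^ 2 / (2 * s ^ 2)))
      = (Real.exp (m + s ^ 2 / 2) * (1 / (Real.sqrt (2 * π) * s))) *
        Real.exp (-(1 / (2 * s ^ 2)) * (x - (m + s ^ 2)) ^ 2) := by
    intro x
    rw [complete_sq s m hs x, ← mul_assoc]
    congr 2
    field_simp
  simp_rw [h]
  exact ((integrable_exp_neg_mul_sq (by positivity : (0:ℝ) < 1 / (2 * s ^ 2))).comp_sub_right
    (m + s ^ 2)).const_mul _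

theorem stmt13 (σ₁ σ₂ q t : ℝ) (hσ₁ : 0 < σ₁) (hσ₂ : 0 < σ₂) (hq : 0 < q) (ht : 0 < t) :
    (∫ x in Set.Ioi q,
        Real.exp x * ((2 * σ₁ / (σ₁ + σ₂)) * (1 / (Real.sqrt (2 * π) * σ₁ * Real.sqrt t)) *
          Real.exp (-(x - (1 - σ₁ / σ₂) * q) ^ 2 / (2 * σ₁ ^ 2 * t)))) +
      (∫ x in Set.Iio q,
        Real.exp x * ((1 / (Real.sqrt (2 * π) * σ₂ * Real.sqrt t)) *
          (Real.exp (-x ^ 2 / (2 * σ₂ ^ 2 * t)) +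
            ((σ₂ - σ₁) / (σ₁ + σ₂)) * Real.exp (-(x - 2 * q) ^ 2 / (2 * σ₂ ^ 2 * t))))) =
      Real.exp (σ₁ ^ 2 * t / 2) * ((2 * σ₁ / (σ₁ + σ₂)) * Real.exp ((1 - σ₁ / σ₂) * q) *
          Phi ((-q + σ₁ * σ₂ * t) / (σ₂ * Real.sqrt t))) +
        Real.exp (σ₂ ^ 2 * t / 2) *
          (Phi ((q - σ₂ ^ 2 * t) / (σ₂ * Real.sqrt t)) +
            ((σ₂ - σ₁) / (σ₁ + σ₂)) * Real.exp (2 * q) *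
              Phi ((-q - σ₂ ^ 2 * t) / (σ₂ * Real.sqrt t))) := by
  set st := Real.sqrt t with hst_def
  have hst : 0 < st := Real.sqrt_pos.mpr ht
  have hst2 : st ^ 2 = t := Real.sq_sqrt ht.le
  have hs₁ : 0 < σ₁ * st := by positivity
  have hs₂ : 0 < σ₂ * st := by positivity
  set m₁ := (1 - σ₁ / σ₂) * q with hm₁
  set K := 2 * σ₁ / (σ₁ + σ₂) with hK
  set k := (σ₂ - σ₁) / (σ₁ + σ₂) with hk
  -- first integral
  have h1 : (∫ x in Set.Ioi q,
        Real.exp x * (K * (1 / (Real.sqrt (2 * π) * σ₁ * st)) *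
          Real.exp (-(x - m₁) ^ 2 / (2 * σ₁ ^ 2 * t))))
      = K * (Real.exp (m₁ + (σ₁ * st) ^ 2 / 2) * Phi ((m₁ + (σ₁ * st) ^ 2 - q) / (σ₁ * st))) := by
    rw [← expgauss_Ioi (σ₁ * st) m₁ q hs₁, ← integral_const_mul]
    refine setIntegral_congr_fun measurableSet_Ioi fun x _ => ?_
    rw [show (σ₁ * st) ^ 2 = σ₁ ^ 2 * t by rw [mul_pow, hst2]]
    ring
  -- second integral: split
  have h2 : (∫ x in Set.Iio q,
        Real.exp x * ((1 / (Real.sqrt (2 * π) * σ₂ * st)) *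
          (Real.exp (-x ^ 2 / (2 * σ₂ ^ 2 * t)) +
            k * Real.exp (-(x - 2 * q) ^ 2 / (2 * σ₂ ^ 2 * t)))))
      = (Real.exp (0 + (σ₂ * st) ^ 2 / 2) * Phi ((q - (0 + (σ₂ * st) ^ 2)) / (σ₂ * st))) +
        k * (Real.exp (2 * q + (σ₂ * st) ^ 2 / 2) *
          Phi ((q - (2 * q + (σ₂ * st) ^ 2)) / (σ₂ * st))) := by
    have hsq : (σ₂ * st) ^ 2 = σ₂ ^ 2 * t := by rw [mul_pow, hst2]
    have hptw : ∀ x ∈ Set.Iio q,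
        Real.exp x * ((1 / (Real.sqrt (2 * π) * σ₂ * st)) *
          (Real.exp (-x ^ 2 / (2 * σ₂ ^ 2 * t)) +
            k * Real.exp (-(x - 2 * q) ^ 2 / (2 * σ₂ ^ 2 * t))))
        = (Real.exp x * ((1 / (Real.sqrt (2 * π) * (σ₂ * st))) *
            Real.exp (-(x - 0) ^ 2 / (2 * (σ₂ * st) ^ 2)))) +
          k * (Real.exp x * ((1 / (Real.sqrt (2 * π) * (σ₂ * st))) *
            Real.exp (-(x - 2 * q) ^ 2 / (2 * (σ₂ * st) ^ 2)))) := by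
      intro x _
      rw [hsq]
      ring
    rw [setIntegral_congr_fun measurableSet_Iio hptw, integral_add
      ((expgauss_integrable (σ₂ * st) 0 hs₂).integrableOn)
      (((expgauss_integrable (σ₂ * st) (2 * q) hs₂).const_mul k).integrableOn),
      integral_const_mul, setIntegral_congr_set Iio_ae_eq_Iic,
      setIntegral_congr_set Iio_ae_eq_Iic,
      expgauss_Iic (σ₂ * st) 0 q hs₂, expgauss_Iic (σ₂ * st) (2 * q) q hs₂]
  rw [h1, h2]
  have hσ₂' : σ₂ ≠ 0 := hσ₂.ne'
  have hst' : st ≠ 0 := hst.ne'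
  have A1 : (m₁ + (σ₁ * st) ^ 2 - q) / (σ₁ * st) = (-q + σ₁ * σ₂ * t) / (σ₂ * st) := by
    rw [hm₁, ← hst2]
    field_simp
    ring
  have A2 : (q - (0 + (σ₂ * st) ^ 2)) / (σ₂ * st) = (q - σ₂ ^ 2 * t) / (σ₂ * st) := by
    rw [← hst2]; ring_nf
  have A3 : (q - (2 * q + (σ₂ * st) ^ 2)) / (σ₂ * st) = (-q - σ₂ ^ 2 * t) / (σ₂ * st) := by
    rw [← hst2]; ring_nf
  have E1 : Real.exp (m₁ + (σ₁ * st) ^ 2 / 2) = Real.exp (σ₁ ^ 2 * t / 2) * Real.exp m₁ := by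
    rw [← Real.exp_add, mul_pow, hst2]; ring_nf
  have E2 : Real.exp (0 + (σ₂ * st) ^ 2 / 2) = Real.exp (σ₂ ^ 2 * t / 2) := by
    rw [mul_pow, hst2, zero_add]
  have E3 : Real.exp (2 * q + (σ₂ * st) ^ 2 / 2)
      = Real.exp (σ₂ ^ 2 * t / 2) * Real.exp (2 * q) := by
    rw [← Real.exp_add, mul_pow, hst2]; ring_nf
  rw [A1, A2, A3, E1, E2, E3]
  ring
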